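/- arXiv:2308.02364 — 2 statements merged into one kernel-verified Lean document; each statement's English description precedes it below -/
import Mathlib

section
/- Let Ω ∈ {0,1}^{N×T} be an observation pattern in which every entry is observed except for ϑ entries, all located in a single fixed column t₀ (rows indexed by a set Q with |Q| = ϑ). Let P_Ω(E) = Ω ∘ E (entrywise product) and let P_T be the tangent space projection associated with incoherent orthonormal U ∈ ℝ^{N×r}, V ∈ ℝ^{T×r} (‖Uᵀe_i‖² ≤ μr/N, ‖Vᵀe_t‖² ≤ μr/T). Then the operator norm of P_T ∘ P_Ω ∘ P_T - P_T on (ℝ^{N×T}, Frobenius inner product) is at most 2 ϑ μ r / min(N, T). -/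
open Matrix

/-- The tangent-space projection `P_T(E) = U Uᵀ E + E V Vᵀ - U Uᵀ E V Vᵀ`. -/
def PT {N T r : ℕ} (U : Matrix (Fin N) (Fin r) ℝ) (V : Matrix (Fin T) (Fin r) ℝ)
    (E : Matrix (Fin N) (Fin T) ℝ) : Matrix (Fin N) (Fin T) ℝ :=
  U * Uᵀ * E + E * (V * Vᵀ) - U * Uᵀ * E * (V * Vᵀ)

/-- The entrywise masking operator `P_Ω(E) = Ω ∘ E`. -/
def POmega {N T : ℕ} (Ω E : Matrix (Fin N) (Fin T) ℝ) : Matrix (Fin N) (Fin T) ℝ :=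
  Matrix.of fun i t => Ω i t * E i t

/-- The Frobenius inner product `⟨A, B⟩ = trace(Aᵀ B)`. -/
def frobInner {N T : ℕ} (A B : Matrix (Fin N) (Fin T) ℝ) : ℝ :=
  (Aᵀ * B).trace

/-- The Frobenius norm. -/
noncomputable def frobNorm {N T : ℕ} (A : Matrix (Fin N) (Fin T) ℝ) : ℝ :=
  Real.sqrt (frobInner A A)

/-
`P_T` is a self-adjoint idempotent for the Frobenius inner product. The mask removes exactly the
entries `(i, t₀)`, `i ∈ Q`, so `P_Ω B = B - ∑_{i ∈ Q} B_{i t₀} e_i e_{t₀}ᵀ`; for `B = P_T A` this gives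
`(P_T P_Ω P_T - P_T) A = -∑_{i ∈ Q} ⟨P_T(e_i e_{t₀}ᵀ), A⟩ P_T(e_i e_{t₀}ᵀ)`. Each rank-one term has
norm at most `‖P_T(e_i e_{t₀}ᵀ)‖_F² ‖A‖_F`, and
`‖P_T(e_i e_tᵀ)‖_F² = P_T(e_i e_tᵀ)_{it} ≤ ‖Uᵀ e_i‖² + ‖Vᵀ e_t‖² ≤ 2 μ r / min(N, T)`.
-/

namespace Frobenius

variable {N T : ℕ}

/-- Matrices as vectors of `ℓ²(Fin N × Fin T)`, which carries the Frobenius inner product. -/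
noncomputable def toEuclidean : Matrix (Fin N) (Fin T) ℝ →ₗ[ℝ] EuclideanSpace ℝ (Fin N × Fin T) where
  toFun A := WithLp.toLp 2 fun p => A p.1 p.2
  map_add' _ _ := rfl
  map_smul' _ _ := rfl

@[simp]
lemma toEuclidean_apply (A : Matrix (Fin N) (Fin T) ℝ) (p : Fin N × Fin T) :
    toEuclidean A p = A p.1 p.2 :=
  rfl

lemma frobInner_eq_sum (A B : Matrix (Fin N) (Fin T) ℝ) :
    frobInner A B = ∑ p : Fin N × Fin T, A p.1 p.2 * B p.1 p.2 := by
  simp only [frobInner, trace, diag_apply, mul_apply, transpose_apply, Fintype.sum_prod_type]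
  exact Finset.sum_comm

lemma frobInner_eq_inner (A B : Matrix (Fin N) (Fin T) ℝ) :
    frobInner A B = inner ℝ (toEuclidean A) (toEuclidean B) := by
  simp [frobInner_eq_sum, PiLp.inner_apply, mul_comm]

lemma frobNorm_eq_norm (A : Matrix (Fin N) (Fin T) ℝ) : frobNorm A = ‖toEuclidean A‖ := by
  rw [frobNorm, frobInner_eq_inner, real_inner_self_eq_norm_sq, Real.sqrt_sq (norm_nonneg _)]

lemma frobNorm_sq (A : Matrix (Fin N) (Fin T) ℝ) : frobNorm A ^ 2 = frobInner A A := by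
  rw [frobNorm_eq_norm, frobInner_eq_inner, real_inner_self_eq_norm_sq]

lemma frobNorm_nonneg (A : Matrix (Fin N) (Fin T) ℝ) : 0 ≤ frobNorm A :=
  Real.sqrt_nonneg _

lemma frobNorm_neg (A : Matrix (Fin N) (Fin T) ℝ) : frobNorm (-A) = frobNorm A := by
  rw [frobNorm_eq_norm, frobNorm_eq_norm, map_neg, norm_neg]

lemma frobNorm_sum_le {ι : Type*} (s : Finset ι) (f : ι → Matrix (Fin N) (Fin T) ℝ) :
    frobNorm (∑ i ∈ s, f i) ≤ ∑ i ∈ s, frobNorm (f i) := by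
  simp only [frobNorm_eq_norm, map_sum]
  exact norm_sum_le _ _

lemma frobNorm_frobInner_smul_le (X A : Matrix (Fin N) (Fin T) ℝ) :
    frobNorm (frobInner X A • X) ≤ frobNorm X ^ 2 * frobNorm A := by
  rw [frobNorm_eq_norm, map_smul, norm_smul, Real.norm_eq_abs, frobInner_eq_inner,
    frobNorm_eq_norm, frobNorm_eq_norm]
  calc |inner ℝ (toEuclidean X) (toEuclidean A)| * ‖toEuclidean X‖
      ≤ ‖toEuclidean X‖ * ‖toEuclidean A‖ * ‖toEuclidean X‖ := by
        gcongr; exact abs_real_inner_le_norm _ _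
    _ = ‖toEuclidean X‖ ^ 2 * ‖toEuclidean A‖ := by ring

lemma frobNorm_sum_frobInner_smul_le {ι : Type*} (s : Finset ι)
    (X : ι → Matrix (Fin N) (Fin T) ℝ) {K : ℝ} (hX : ∀ i ∈ s, frobNorm (X i) ^ 2 ≤ K)
    (A : Matrix (Fin N) (Fin T) ℝ) :
    frobNorm (∑ i ∈ s, frobInner (X i) A • X i) ≤ s.card * K * frobNorm A := by
  calc frobNorm (∑ i ∈ s, frobInner (X i) A • X i)
      ≤ ∑ i ∈ s, frobNorm (frobInner (X i) A • X i) := frobNorm_sum_le _ _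
    _ ≤ ∑ _i ∈ s, K * frobNorm A := Finset.sum_le_sum fun i hi =>
        (frobNorm_frobInner_smul_le _ _).trans
          (mul_le_mul_of_nonneg_right (hX i hi) (frobNorm_nonneg A))
    _ = s.card * K * frobNorm A := by rw [Finset.sum_const, nsmul_eq_mul, mul_assoc]

lemma frobInner_single_one_left (i : Fin N) (t : Fin T) (X : Matrix (Fin N) (Fin T) ℝ) :
    frobInner (single i t 1) X = X i t := by
  simp [frobInner_eq_sum, Fintype.sum_prod_type, single, ite_and]

end Frobenius

open Frobenius

namespace PT

variable {N T r : ℕ} (U : Matrix (Fin N) (Fin r) ℝ) (V : Matrix (Fin T) (Fin r) ℝ)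

@[simps]
def linearMap : Matrix (Fin N) (Fin T) ℝ →ₗ[ℝ] Matrix (Fin N) (Fin T) ℝ where
  toFun := PT U V
  map_add' X Y := by simp only [PT, Matrix.mul_add, Matrix.add_mul]; abel
  map_smul' c X := by simp only [PT, Matrix.mul_smul, Matrix.smul_mul, smul_sub, smul_add,
    RingHom.id_apply]

lemma idem (hU : Uᵀ * U = 1) (hV : Vᵀ * V = 1) (A : Matrix (Fin N) (Fin T) ℝ) :
    PT U V (PT U V A) = PT U V A := by
  have hUU : U * Uᵀ * (U * Uᵀ) = U * Uᵀ := by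
    rw [Matrix.mul_assoc, ← Matrix.mul_assoc Uᵀ, hU, Matrix.one_mul]
  have hVV : ∀ X : Matrix (Fin N) (Fin T) ℝ, X * V * Vᵀ * V * Vᵀ = X * V * Vᵀ := fun X => by
    rw [Matrix.mul_assoc (X * V) Vᵀ V, hV, Matrix.mul_one]
  simp only [PT, Matrix.mul_add, Matrix.add_mul, Matrix.mul_sub, Matrix.sub_mul,
    ← Matrix.mul_assoc, hUU, hVV]
  abel

lemma frobInner_left (X Y : Matrix (Fin N) (Fin T) ℝ) :
    frobInner (PT U V X) Y = frobInner X (PT U V Y) := by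
  have hU : (U * Uᵀ)ᵀ = U * Uᵀ := by rw [transpose_mul, transpose_transpose]
  have hV : (V * Vᵀ)ᵀ = V * Vᵀ := by rw [transpose_mul, transpose_transpose]
  have h₁ : ((U * Uᵀ * X)ᵀ * Y).trace = (Xᵀ * (U * Uᵀ * Y)).trace := by
    rw [transpose_mul, hU, Matrix.mul_assoc]
  have h₂ : ((X * (V * Vᵀ))ᵀ * Y).trace = (Xᵀ * (Y * (V * Vᵀ))).trace := by
    rw [transpose_mul, hV, Matrix.mul_assoc, trace_mul_comm, Matrix.mul_assoc]
  have h₃ : ((U * Uᵀ * X * (V * Vᵀ))ᵀ * Y).trace = (Xᵀ * (U * Uᵀ * Y * (V * Vᵀ))).trace := by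
    rw [transpose_mul, hV, transpose_mul, hU, Matrix.mul_assoc (V * Vᵀ), trace_mul_comm]
    simp only [Matrix.mul_assoc]
  simp only [PT, frobInner, transpose_add, transpose_sub, Matrix.add_mul, Matrix.sub_mul,
    Matrix.mul_add, Matrix.mul_sub, trace_add, trace_sub, h₁, h₂, h₃]

lemma single_apply_self (i : Fin N) (t : Fin T) :
    PT U V (single i t 1) i t =
      (U * Uᵀ) i i + (V * Vᵀ) t t - (U * Uᵀ) i i * (V * Vᵀ) t t := by
  simp [PT, mul_apply, single, ite_and, Finset.mul_sum, Finset.sum_mul]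

lemma frobNorm_single_sq (hU : Uᵀ * U = 1) (hV : Vᵀ * V = 1) (i : Fin N) (t : Fin T) :
    frobNorm (PT U V (single i t 1)) ^ 2 =
      (U * Uᵀ) i i + (V * Vᵀ) t t - (U * Uᵀ) i i * (V * Vᵀ) t t := by
  rw [frobNorm_sq, frobInner_left, idem U V hU hV, frobInner_single_one_left, single_apply_self]

lemma frobNorm_single_sq_le (hU : Uᵀ * U = 1) (hV : Vᵀ * V = 1) (i : Fin N) (t : Fin T) :
    frobNorm (PT U V (single i t 1)) ^ 2 ≤ ∑ k, U i k ^ 2 + ∑ k, V t k ^ 2 := by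
  have hUii : (U * Uᵀ) i i = ∑ k, U i k ^ 2 := by simp [mul_apply, sq]
  have hVtt : (V * Vᵀ) t t = ∑ k, V t k ^ 2 := by simp [mul_apply, sq]
  have hprod : 0 ≤ (U * Uᵀ) i i * (V * Vᵀ) t t := by
    rw [hUii, hVtt]; positivity
  rw [frobNorm_single_sq U V hU hV, ← hUii, ← hVtt]
  linarith

end PT

lemma POmega_eq_sub_sum_single {N T : ℕ} (Q : Finset (Fin N)) (t₀ : Fin T)
    (Ω : Matrix (Fin N) (Fin T) ℝ) (hΩ : ∀ i t, Ω i t = if i ∈ Q ∧ t = t₀ then 0 else 1)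
    (B : Matrix (Fin N) (Fin T) ℝ) :
    POmega Ω B = B - ∑ i ∈ Q, B i t₀ • single i t₀ 1 := by
  ext a b
  by_cases hb : b = t₀
  · subst hb
    by_cases ha : a ∈ Q <;> simp [POmega, hΩ, ha, Matrix.sum_apply, single]
  · simp [POmega, hΩ, hb, Ne.symm hb, Matrix.sum_apply, single]

lemma PT_POmega_PT_sub_PT {N T r : ℕ} {U : Matrix (Fin N) (Fin r) ℝ}
    {V : Matrix (Fin T) (Fin r) ℝ} (hU : Uᵀ * U = 1) (hV : Vᵀ * V = 1)
    (Q : Finset (Fin N)) (t₀ : Fin T) (Ω : Matrix (Fin N) (Fin T) ℝ)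
    (hΩ : ∀ i t, Ω i t = if i ∈ Q ∧ t = t₀ then 0 else 1) (A : Matrix (Fin N) (Fin T) ℝ) :
    PT U V (POmega Ω (PT U V A)) - PT U V A =
      -∑ i ∈ Q, frobInner (PT U V (single i t₀ 1)) A • PT U V (single i t₀ 1) := by
  have hcoeff : ∀ i, PT U V A i t₀ = frobInner (PT U V (single i t₀ 1)) A := fun i => by
    rw [PT.frobInner_left, frobInner_single_one_left]
  rw [POmega_eq_sub_sum_single Q t₀ Ω hΩ, ← PT.linearMap_apply U V, map_sub, map_sum,
    PT.linearMap_apply, PT.idem U V hU hV]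
  simp only [map_smul, PT.linearMap_apply, hcoeff]
  abel

lemma add_le_two_mul_div_min {a b c x y : ℝ} (hc : 0 ≤ c) (hx : 0 < x) (hy : 0 < y)
    (ha : a ≤ c / x) (hb : b ≤ c / y) : a + b ≤ 2 * c / min x y := by
  have hxy : 0 < min x y := lt_min hx hy
  have hx' : c / x ≤ c / min x y := div_le_div_of_nonneg_left hc hxy (min_le_left x y)
  have hy' : c / y ≤ c / min x y := div_le_div_of_nonneg_left hc hxy (min_le_right x y)
  linarith [mul_div_assoc 2 c (min x y)]

/-- Key injectivity lemma: if all entries are observed except `ϑ` entries located in a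
single column `t₀`, then the operator norm (w.r.t. the Frobenius norm) of
`P_T ∘ P_Ω ∘ P_T - P_T` is at most `2 ϑ μ r / min(N, T)`, i.e.
`‖(P_T P_Ω P_T - P_T)(A)‖_F ≤ (2 ϑ μ r / min(N, T)) ‖A‖_F` for every `A`. -/
theorem stmt9 (N T r : ℕ) (μ : ℝ) (hμ : 1 ≤ μ)
    (U : Matrix (Fin N) (Fin r) ℝ) (V : Matrix (Fin T) (Fin r) ℝ)
    (hU : Uᵀ * U = 1) (hV : Vᵀ * V = 1)
    (hUinc : ∀ i, ∑ k, U i k ^ 2 ≤ μ * r / N)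
    (hVinc : ∀ t, ∑ k, V t k ^ 2 ≤ μ * r / T)
    (Q : Finset (Fin N)) (ϑ : ℕ) (hQ : Q.card = ϑ) (t₀ : Fin T)
    (Ω : Matrix (Fin N) (Fin T) ℝ)
    (hΩ : ∀ i t, Ω i t = if i ∈ Q ∧ t = t₀ then 0 else 1) :
    ∀ A : Matrix (Fin N) (Fin T) ℝ,
      frobNorm (PT U V (POmega Ω (PT U V A)) - PT U V A) ≤
        (2 * ϑ * μ * r / min (N : ℝ) (T : ℝ)) * frobNorm A := by
  intro A
  have hterm : ∀ i ∈ Q, frobNorm (PT U V (single i t₀ 1)) ^ 2 ≤ 2 * (μ * r) / min (N : ℝ) T :=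
    fun i _ => (PT.frobNorm_single_sq_le U V hU hV i t₀).trans <|
      add_le_two_mul_div_min (by positivity) (by exact_mod_cast i.pos)
        (by exact_mod_cast t₀.pos) (hUinc i) (hVinc t₀)
  rw [PT_POmega_PT_sub_PT hU hV Q t₀ Ω hΩ A, frobNorm_neg]
  calc _ ≤ Q.card * (2 * (μ * r) / min (N : ℝ) T) * frobNorm A :=
        frobNorm_sum_frobInner_smul_le Q _ hterm A
    _ = _ := by rw [hQ]; ring
end

section
/- Let M be an N × T rank-r matrix with SVD M = U D Vᵀ, rows u_iᵀ of U and v_tᵀ of V, condition number κ = ψ₁(D)/ψ_r(D). Let M₀ = (m_{it})_{i ≤ N₀, t ≤ T₀} be the submatrix on the first N₀ rows and T₀ columns. Suppose there exist constants 0 < c ≤ C with c I_r ⪯ (N/N₀) ∑_{i ≤ N₀} u_i u_iᵀ ⪯ C I_r and c I_r ⪯ (T/T₀) ∑_{t ≤ T₀} v_t v_tᵀ ⪯ C I_r. Then the largest singular value of M₀ satisfies ψ₁(M₀) ≤ C ψ₁(M) √(N₀T₀/(NT)) and the smallest nonzero singular value satisfies ψ_r(M₀) ≥ c ψ_r(M)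 √(N₀T₀/(NT)); in particular M₀ has rank r and condition number κ₀ ≤ (C/c) κ. -/
/-!
Write `M₀ = U₀ D V₀ᵀ` with `U₀`, `V₀` the selected rows of `U`, `V`; the hypotheses are the frame
bounds `(cN₀/N) ‖z‖² ≤ ‖U₀ z‖² ≤ (CN₀/N) ‖z‖²` and their analogues for `V₀`. They bound every
eigenvalue of `M₀ᵀ M₀` above by `C² (N₀T₀/NT) max d²` and every nonzero one below by
`c² (N₀T₀/NT) min d²`; since `U₀` and `V₀` are injective, `M₀` has rank `r`, so exactly `r`
eigenvalues are nonzero. For `M` itself every `d k ^ 2` is an eigenvalue of `Mᵀ M` (with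
eigenvector `V e_k`), so `max d ≤ ψ₁(M)` and `ψ_r(M) ≤ min d`.
-/

open Matrix

/-- The singular values of `A` (square roots of the eigenvalues of `Aᴴ A`),
listed in decreasing order. -/
noncomputable def svalList {N T : ℕ} (A : Matrix (Fin N) (Fin T) ℝ) : List ℝ :=
  ((Multiset.map
      (fun k => Real.sqrt ((Matrix.isHermitian_conjTranspose_mul_self A).eigenvalues k))
      (Finset.univ.val : Multiset (Fin T))).sort (· ≤ ·)).reverse

/-- `sval A k` is the `(k+1)`-st largest singular value of `A` (so `sval A 0 = ψ₁(A)`). -/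
noncomputable def sval {N T : ℕ} (A : Matrix (Fin N) (Fin T) ℝ) (k : ℕ) : ℝ :=
  (svalList A).getD k 0

open Finset

namespace List

variable {α : Type*} [LinearOrder α]

theorem getD_le_of_countP_lt_le {l : List α} (hl : l.Pairwise (· ≥ ·)) {d b : α} (hd : d ≤ b)
    {j : ℕ} (hj : l.countP (b < ·) ≤ j) : l.getD j d ≤ b := by
  induction l generalizing j with
  | nil => simpa using hd
  | cons x xs ih =>
    rw [pairwise_cons] at hl
    cases j with
    | zero =>
      by_contra! hx
      simp only [getD_cons_zero] at hx
      simp [hx] at hj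
    | succ j =>
      refine ih hl.2 ?_
      by_cases hbx : b < x
      · simpa [countP_cons, hbx] using hj
      · rw [countP_eq_zero.mpr fun y hy => by simpa using (hl.1 y hy).trans (not_lt.mp hbx)]
        exact j.zero_le

theorem le_getD_of_lt_countP {l : List α} (hl : l.Pairwise (· ≥ ·)) {a d : α} {j : ℕ}
    (hj : j < l.countP (a ≤ ·)) : a ≤ l.getD j d := by
  induction l generalizing j with
  | nil => simp at hj
  | cons x xs ih =>
    rw [pairwise_cons] at hl
    cases j with
    | zero =>
      by_contra! hx
      simp only [getD_cons_zero] at hx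
      rw [countP_cons, countP_eq_zero.mpr fun y hy => by simpa using (hl.1 y hy).trans_lt hx] at hj
      simp [hx.not_ge] at hj
    | succ j =>
      refine ih hl.2 ?_
      rw [countP_cons] at hj
      split_ifs at hj <;> omega

end List

namespace Matrix

variable {m n r : Type*}

theorem sq_dotProduct_le [Fintype n] (x y : n → ℝ) : (x ⬝ᵥ y) ^ 2 ≤ (x ⬝ᵥ x) * (y ⬝ᵥ y) := by
  simpa [dotProduct, sq] using sum_mul_sq_le_sq_mul_sq univ x y

theorem dotProduct_self_nonneg [Fintype n] (x : n → ℝ) : 0 ≤ x ⬝ᵥ x :=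
  Fintype.sum_nonneg fun i => mul_self_nonneg (x i)

theorem dotProduct_transpose_mul_self_mulVec [Fintype m] [Fintype n] (A : Matrix m n ℝ)
    (x : n → ℝ) : x ⬝ᵥ ((Aᵀ * A) *ᵥ x) = (A *ᵥ x) ⬝ᵥ (A *ᵥ x) := by
  rw [← mulVec_mulVec, dotProduct_transpose_mulVec]

theorem transpose_mulVec_dotProduct_self_le [Fintype n] [Fintype r] {Y : Matrix n r ℝ} {γ : ℝ}
    (hγ : 0 ≤ γ) (hY : ∀ w, (Y *ᵥ w) ⬝ᵥ (Y *ᵥ w) ≤ γ * (w ⬝ᵥ w)) (x : n → ℝ) :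
    (Yᵀ *ᵥ x) ⬝ᵥ (Yᵀ *ᵥ x) ≤ γ * (x ⬝ᵥ x) := by
  set y := Yᵀ *ᵥ x
  have hcs := sq_dotProduct_le x (Y *ᵥ y)
  rw [← dotProduct_transpose_mulVec, dotProduct_comm] at hcs
  have hx := dotProduct_self_nonneg x
  rcases (dotProduct_self_nonneg y).eq_or_lt with hy | hy
  · rw [← hy]; positivity
  · nlinarith [mul_le_mul_of_nonneg_left (hY y) hx]

section Hermitian

variable [Fintype n] [DecidableEq n] {H : Matrix n n ℝ} (hH : H.IsHermitian)

theorem IsHermitian.dotProduct_eigenvectorBasis_self (k : n) :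
    (hH.eigenvectorBasis k : n → ℝ) ⬝ᵥ (hH.eigenvectorBasis k : n → ℝ) = 1 := by
  have := hH.eigenvectorBasis.inner_eq_one k
  rwa [EuclideanSpace.inner_eq_star_dotProduct, star_trivial] at this

theorem IsHermitian.eigenvalues_le_of_dotProduct_mulVec_le {β : ℝ}
    (h : ∀ x, x ⬝ᵥ (H *ᵥ x) ≤ β * (x ⬝ᵥ x)) (k : n) : hH.eigenvalues k ≤ β := by
  simpa [hH.mulVec_eigenvectorBasis, hH.dotProduct_eigenvectorBasis_self] using
    h (hH.eigenvectorBasis k)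

theorem IsHermitian.exists_eigenvalues_eq {x : n → ℝ} {μ : ℝ} (hx : x ≠ 0)
    (hHx : H *ᵥ x = μ • x) : ∃ k, hH.eigenvalues k = μ := by
  have : μ ∈ spectrum ℝ (toLin' H) :=
    (Module.End.hasEigenvalue_of_hasEigenvector ⟨by simpa using hHx, hx⟩).mem_spectrum
  rwa [spectrum_toLin', hH.spectrum_real_eq_range_eigenvalues] at this

end Hermitian

theorem eigenvalues_conjTranspose_mul_self_le [Fintype m] [Fintype n] [DecidableEq n]
    {A : Matrix m n ℝ} {β : ℝ} (h : ∀ x, (A *ᵥ x) ⬝ᵥ (A *ᵥ x) ≤ β * (x ⬝ᵥ x)) (k : n) :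
    (isHermitian_conjTranspose_mul_self A).eigenvalues k ≤ β :=
  IsHermitian.eigenvalues_le_of_dotProduct_mulVec_le _ (fun x => by
    rw [conjTranspose_eq_transpose_of_trivial, dotProduct_transpose_mul_self_mulVec]
    exact h x) k

/-- A unit eigenvector `x` with nonzero eigenvalue lies in the range of `Y`, say `x = Y w`; then
`⟪Yᵀ x, w⟫ = 1` and `b ‖w‖² ≤ ‖Y w‖² = 1` force `‖Yᵀ x‖² ≥ b`. -/
theorem eigenvalues_conjTranspose_mul_self_eq_zero_or_le [Fintype m] [Fintype n] [Fintype r]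
    [DecidableEq n] {B : Matrix m r ℝ} {Y : Matrix n r ℝ}
    {a b : ℝ} (ha : 0 ≤ a) (hB : ∀ y, a * (y ⬝ᵥ y) ≤ (B *ᵥ y) ⬝ᵥ (B *ᵥ y))
    (hY : ∀ w, b * (w ⬝ᵥ w) ≤ (Y *ᵥ w) ⬝ᵥ (Y *ᵥ w)) (k : n) :
    (isHermitian_conjTranspose_mul_self (B * Yᵀ)).eigenvalues k = 0 ∨
      a * b ≤ (isHermitian_conjTranspose_mul_self (B * Yᵀ)).eigenvalues k := by
  set hH := isHermitian_conjTranspose_mul_self (B * Yᵀ)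
  set μ := hH.eigenvalues k
  set x : n → ℝ := (hH.eigenvectorBasis k : n → ℝ)
  refine or_iff_not_imp_left.mpr fun hμ => ?_
  have hx : x ⬝ᵥ x = 1 := hH.dotProduct_eigenvectorBasis_self k
  have hHx : ((B * Yᵀ)ᴴ * (B * Yᵀ)) *ᵥ x = μ • x := hH.mulVec_eigenvectorBasis k
  have hH_eq : (B * Yᵀ)ᴴ * (B * Yᵀ) = Y * (Bᵀ * B) * Yᵀ := by
    simp only [conjTranspose_eq_transpose_of_trivial, transpose_mul, transpose_transpose,
      Matrix.mul_assoc]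
  set y := Yᵀ *ᵥ x
  set w := μ⁻¹ • ((Bᵀ * B) *ᵥ y)
  have hYG : Y *ᵥ ((Bᵀ * B) *ᵥ y) = μ • x := by
    rw [mulVec_mulVec, mulVec_mulVec, ← hH_eq, hHx]
  have hμ_eq : μ = (B *ᵥ y) ⬝ᵥ (B *ᵥ y) := by
    rw [← dotProduct_transpose_mul_self_mulVec, dotProduct_comm,
      dotProduct_transpose_mulVec Y _ x, hYG, dotProduct_smul, hx, smul_eq_mul, mul_one]
  have hxw : Y *ᵥ w = x := by
    rw [mulVec_smul, hYG, smul_smul, inv_mul_cancel₀ hμ, one_smul]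
  have hyw : y ⬝ᵥ w = 1 := by rw [dotProduct_comm, dotProduct_transpose_mulVec, hxw, hx]
  have hw : b * (w ⬝ᵥ w) ≤ 1 := hx ▸ hxw ▸ hY w
  have hcs : 1 ≤ (y ⬝ᵥ y) * (w ⬝ᵥ w) := by simpa [hyw] using sq_dotProduct_le y w
  have hy : b ≤ y ⬝ᵥ y := by nlinarith [dotProduct_self_nonneg y, dotProduct_self_nonneg w]
  calc a * b ≤ a * (y ⬝ᵥ y) := mul_le_mul_of_nonneg_left hy ha
    _ ≤ μ := hμ_eq ▸ hB y

theorem sum_vecMulVec_self [Fintype m] (X : Matrix m r ℝ) :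
    ∑ i, vecMulVec (X i) (X i) = Xᵀ * X := by
  ext k l
  simp [sum_apply, vecMulVec_apply, mul_apply]

theorem le_mulVec_dotProduct_self_of_posSemidef [Fintype m] [Fintype r] [DecidableEq r]
    {X : Matrix m r ℝ} {s a : ℝ}
    (hs : 0 < s) (h : (s • ∑ i, vecMulVec (X i) (X i) - a • 1).PosSemidef) (z : r → ℝ) :
    a / s * (z ⬝ᵥ z) ≤ (X *ᵥ z) ⬝ᵥ (X *ᵥ z) := by
  have := h.dotProduct_mulVec_nonneg z
  rw [sum_vecMulVec_self] at this
  simp only [star_trivial, sub_mulVec, smul_mulVec, one_mulVec, dotProduct_sub, dotProduct_smul,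
    smul_eq_mul, sub_nonneg, dotProduct_transpose_mul_self_mulVec] at this
  rw [div_mul_eq_mul_div, div_le_iff₀ hs]
  linarith

theorem mulVec_dotProduct_self_le_of_posSemidef [Fintype m] [Fintype r] [DecidableEq r]
    {X : Matrix m r ℝ} {s b : ℝ}
    (hs : 0 < s) (h : (b • 1 - s • ∑ i, vecMulVec (X i) (X i)).PosSemidef) (z : r → ℝ) :
    (X *ᵥ z) ⬝ᵥ (X *ᵥ z) ≤ b / s * (z ⬝ᵥ z) := by
  have := h.dotProduct_mulVec_nonneg z
  rw [sum_vecMulVec_self] at this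
  simp only [star_trivial, sub_mulVec, smul_mulVec, one_mulVec, dotProduct_sub, dotProduct_smul,
    smul_eq_mul, sub_nonneg, dotProduct_transpose_mul_self_mulVec] at this
  rw [div_mul_eq_mul_div, le_div_iff₀ hs]
  linarith

theorem posDef_transpose_mul_self_of_le [Fintype m] [Fintype r] {X : Matrix m r ℝ} {a : ℝ}
    (ha : 0 < a) (hX : ∀ z, a * (z ⬝ᵥ z) ≤ (X *ᵥ z) ⬝ᵥ (X *ᵥ z)) : (Xᵀ * X).PosDef := by
  refine .of_dotProduct_mulVec_pos (by simpa using isHermitian_conjTranspose_mul_self X)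
    fun z hz => ?_
  rw [star_trivial, dotProduct_transpose_mul_self_mulVec]
  exact (mul_pos ha (by simpa using dotProduct_self_star_pos_iff.mpr hz)).trans_le (hX z)

theorem rank_mul_diagonal_mul_transpose [Fintype m] [Fintype n] [Fintype r] [DecidableEq r]
    {X : Matrix m r ℝ} {Y : Matrix n r ℝ} {d : r → ℝ} (hX : (Xᵀ * X).PosDef)
    (hY : (Yᵀ * Y).PosDef) (hd : ∀ k, d k ≠ 0) :
    (X * diagonal d * Yᵀ).rank = Fintype.card r := by
  refine le_antisymm ((rank_mul_le_left _ _).trans ((rank_mul_le_left _ _).trans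
    (rank_le_card_width X))) ?_
  have hunit : IsUnit (Xᵀ * (X * diagonal d * Yᵀ) * Y) := by
    rw [show Xᵀ * (X * diagonal d * Yᵀ) * Y = Xᵀ * X * diagonal d * (Yᵀ * Y) by
      simp only [Matrix.mul_assoc], isUnit_iff_isUnit_det, det_mul, det_mul, det_diagonal]
    exact (hX.det_pos.ne'.isUnit.mul (prod_ne_zero_iff.mpr fun k _ => hd k).isUnit).mul
      hY.det_pos.ne'.isUnit
  rw [← rank_of_isUnit _ hunit]
  exact (rank_mul_le_left _ _).trans (rank_mul_le_right _ _)

theorem mulVec_dotProduct_self_of_transpose_mul_self_eq_one [Fintype m] [Fintype r]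
    [DecidableEq r] {U : Matrix m r ℝ} (hU : Uᵀ * U = 1) (z : r → ℝ) :
    (U *ᵥ z) ⬝ᵥ (U *ᵥ z) = z ⬝ᵥ z := by
  rw [← dotProduct_transpose_mul_self_mulVec, hU, one_mulVec]

theorem diagonal_mulVec_dotProduct_self [Fintype r] [DecidableEq r] (d y : r → ℝ) :
    (diagonal d *ᵥ y) ⬝ᵥ (diagonal d *ᵥ y) = ∑ k, d k ^ 2 * y k ^ 2 := by
  simp only [dotProduct, mulVec_diagonal]
  exact sum_congr rfl fun k _ => by ring

theorem sq_mul_le_diagonal_mulVec_dotProduct_self [Fintype r] [DecidableEq r] {d : r → ℝ}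
    {δ : ℝ} (hδ : 0 ≤ δ) (hd : ∀ k, δ ≤ |d k|) (y : r → ℝ) :
    δ ^ 2 * (y ⬝ᵥ y) ≤ (diagonal d *ᵥ y) ⬝ᵥ (diagonal d *ᵥ y) := by
  rw [diagonal_mulVec_dotProduct_self, dotProduct, mul_sum]
  refine sum_le_sum fun k _ => ?_
  rw [← sq_abs (d k), ← sq]
  gcongr
  exact hd k

theorem diagonal_mulVec_dotProduct_self_le [Fintype r] [DecidableEq r] {d : r → ℝ} {Δ : ℝ}
    (hd : ∀ k, |d k| ≤ Δ) (y : r → ℝ) :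
    (diagonal d *ᵥ y) ⬝ᵥ (diagonal d *ᵥ y) ≤ Δ ^ 2 * (y ⬝ᵥ y) := by
  rw [diagonal_mulVec_dotProduct_self, dotProduct, mul_sum]
  refine sum_le_sum fun k _ => ?_
  rw [← sq_abs (d k), ← sq]
  gcongr
  exact hd k

end Matrix

section SingularValues

variable {N T : ℕ} (A : Matrix (Fin N) (Fin T) ℝ)

theorem svalList_pairwise_ge : (svalList A).Pairwise (· ≥ ·) :=
  List.pairwise_reverse.mpr (Multiset.pairwise_sort _ _)

theorem svalList_countP (p : ℝ → Prop) [DecidablePred p] :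
    (svalList A).countP p = #{k | p √((isHermitian_conjTranspose_mul_self A).eigenvalues k)} := by
  rw [svalList, List.countP_reverse, ← Multiset.coe_countP, Multiset.sort_eq,
    Multiset.countP_map, Finset.card_def, Finset.filter_val]

variable {A}

theorem sval_le_sqrt {b : ℝ} (hb : 0 ≤ b) {j : ℕ}
    (h : #{k | b < (isHermitian_conjTranspose_mul_self A).eigenvalues k} ≤ j) : sval A j ≤ √b := by
  refine List.getD_le_of_countP_lt_le (svalList_pairwise_ge A) (Real.sqrt_nonneg b) ?_
  rwa [svalList_countP, filter_congr fun k _ => Real.sqrt_lt_sqrt_iff hb]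

theorem sqrt_le_sval {a : ℝ} {j : ℕ}
    (h : j < #{k | a ≤ (isHermitian_conjTranspose_mul_self A).eigenvalues k}) : √a ≤ sval A j := by
  refine List.le_getD_of_lt_countP (svalList_pairwise_ge A) ?_
  rwa [svalList_countP, filter_congr fun k _ =>
    Real.sqrt_le_sqrt_iff (eigenvalues_conjTranspose_mul_self_nonneg A k)]

theorem sqrt_le_sval_pred_of_rank {r : ℕ} (hr : 0 < r) (hA : A.rank = r) {a : ℝ}
    (h : ∀ k, (isHermitian_conjTranspose_mul_self A).eigenvalues k = 0 ∨
      a ≤ (isHermitian_conjTranspose_mul_self A).eigenvalues k) :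
    √a ≤ sval A (r - 1) := by
  refine sqrt_le_sval ((Nat.sub_lt hr one_pos).trans_le ?_)
  rw [← hA, ← rank_conjTranspose_mul_self,
    (isHermitian_conjTranspose_mul_self A).rank_eq_card_non_zero_eigs, Fintype.card_subtype]
  exact card_le_card fun k hk => by simpa using (h k).resolve_left (mem_filter.mp hk).2

end SingularValues

section Factorization

variable {N T : ℕ} {ι : Type*} [Fintype ι] [DecidableEq ι] {A : Matrix (Fin N) (Fin T) ℝ}

theorem sval_le_of_eq_mul_diagonal_mul_transpose {X : Matrix (Fin N) ι ℝ}
    {Y : Matrix (Fin T) ι ℝ} {d : ι → ℝ} (hA : A = X * diagonal d * Yᵀ) {bX bY Δ : ℝ}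
    (hbX : 0 ≤ bX) (hbY : 0 ≤ bY) (hΔ : 0 ≤ Δ)
    (hX : ∀ z, (X *ᵥ z) ⬝ᵥ (X *ᵥ z) ≤ bX * (z ⬝ᵥ z))
    (hY : ∀ w, (Y *ᵥ w) ⬝ᵥ (Y *ᵥ w) ≤ bY * (w ⬝ᵥ w)) (hd : ∀ k, |d k| ≤ Δ) (j : ℕ) :
    sval A j ≤ √(bX * bY) * Δ := by
  have hAx : ∀ x, (A *ᵥ x) ⬝ᵥ (A *ᵥ x) ≤ bX * bY * Δ ^ 2 * (x ⬝ᵥ x) := fun x =>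
    calc (A *ᵥ x) ⬝ᵥ (A *ᵥ x)
        = (X *ᵥ (diagonal d *ᵥ (Yᵀ *ᵥ x))) ⬝ᵥ (X *ᵥ (diagonal d *ᵥ (Yᵀ *ᵥ x))) := by
          rw [hA, mulVec_mulVec, mulVec_mulVec]
      _ ≤ bX * ((diagonal d *ᵥ (Yᵀ *ᵥ x)) ⬝ᵥ (diagonal d *ᵥ (Yᵀ *ᵥ x))) := hX _
      _ ≤ bX * (Δ ^ 2 * ((Yᵀ *ᵥ x) ⬝ᵥ (Yᵀ *ᵥ x))) := by
          gcongr; exact diagonal_mulVec_dotProduct_self_le hd _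
      _ ≤ bX * (Δ ^ 2 * (bY * (x ⬝ᵥ x))) := by
          gcongr; exact transpose_mulVec_dotProduct_self_le hbY hY x
      _ = bX * bY * Δ ^ 2 * (x ⬝ᵥ x) := by ring
  rw [← Real.sqrt_sq hΔ, ← Real.sqrt_mul (mul_nonneg hbX hbY)]
  refine sval_le_sqrt (by positivity) ?_
  rw [filter_eq_empty_iff.mpr fun k _ => not_lt.mpr (eigenvalues_conjTranspose_mul_self_le hAx k),
    card_empty]
  exact j.zero_le

theorem rank_eq_of_eq_mul_diagonal_mul_transpose {X : Matrix (Fin N) ι ℝ}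
    {Y : Matrix (Fin T) ι ℝ} {d : ι → ℝ} (hA : A = X * diagonal d * Yᵀ) {aX aY : ℝ}
    (haX : 0 < aX) (haY : 0 < aY)
    (hX : ∀ z, aX * (z ⬝ᵥ z) ≤ (X *ᵥ z) ⬝ᵥ (X *ᵥ z))
    (hY : ∀ w, aY * (w ⬝ᵥ w) ≤ (Y *ᵥ w) ⬝ᵥ (Y *ᵥ w)) (hd : ∀ k, d k ≠ 0) :
    A.rank = Fintype.card ι :=
  hA ▸ rank_mul_diagonal_mul_transpose (posDef_transpose_mul_self_of_le haX hX)
    (posDef_transpose_mul_self_of_le haY hY) hd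

theorem le_sval_pred_of_eq_mul_diagonal_mul_transpose {r : ℕ} (hr : 0 < r)
    {X : Matrix (Fin N) (Fin r) ℝ} {Y : Matrix (Fin T) (Fin r) ℝ} {d : Fin r → ℝ}
    (hA : A = X * diagonal d * Yᵀ) {aX aY δ : ℝ} (haX : 0 < aX) (haY : 0 < aY) (hδ : 0 < δ)
    (hX : ∀ z, aX * (z ⬝ᵥ z) ≤ (X *ᵥ z) ⬝ᵥ (X *ᵥ z))
    (hY : ∀ w, aY * (w ⬝ᵥ w) ≤ (Y *ᵥ w) ⬝ᵥ (Y *ᵥ w)) (hd : ∀ k, δ ≤ |d k|) :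
    √(aX * aY) * δ ≤ sval A (r - 1) := by
  have hrank : A.rank = r := by
    rw [rank_eq_of_eq_mul_diagonal_mul_transpose hA haX haY hX hY fun k =>
      abs_pos.mp (hδ.trans_le (hd k)), Fintype.card_fin]
  have hB : ∀ y, aX * δ ^ 2 * (y ⬝ᵥ y) ≤ ((X * diagonal d) *ᵥ y) ⬝ᵥ ((X * diagonal d) *ᵥ y) :=
    fun y => by
      rw [← mulVec_mulVec, mul_assoc]
      exact (mul_le_mul_of_nonneg_left (sq_mul_le_diagonal_mulVec_dotProduct_self hδ.le hd y)
        haX.le).trans (hX _)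
  rw [← Real.sqrt_sq hδ.le, ← Real.sqrt_mul (mul_nonneg haX.le haY.le),
    show aX * aY * δ ^ 2 = aX * δ ^ 2 * aY by ring]
  exact sqrt_le_sval_pred_of_rank hr hrank (hA ▸
    eigenvalues_conjTranspose_mul_self_eq_zero_or_le (by positivity) hB hY)

end Factorization

section SVD

variable {N T : ℕ} {ι : Type*} [Fintype ι] [DecidableEq ι] {A : Matrix (Fin N) (Fin T) ℝ}
  {U : Matrix (Fin N) ι ℝ} {V : Matrix (Fin T) ι ℝ} {d : ι → ℝ}

theorem rank_eq_of_svd (hU : Uᵀ * U = 1) (hV : Vᵀ * V = 1) (hA : A = U * diagonal d * Vᵀ)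
    (hd : ∀ k, d k ≠ 0) : A.rank = Fintype.card ι :=
  hA ▸ rank_mul_diagonal_mul_transpose (hU ▸ PosDef.one) (hV ▸ PosDef.one) hd

theorem exists_eigenvalues_eq_sq_of_svd (hU : Uᵀ * U = 1) (hV : Vᵀ * V = 1)
    (hA : A = U * diagonal d * Vᵀ) (k : ι) :
    ∃ i, (isHermitian_conjTranspose_mul_self A).eigenvalues i = d k ^ 2 := by
  have hAA : Aᴴ * A = V * diagonal (d ^ 2) * Vᵀ := by
    rw [conjTranspose_eq_transpose_of_trivial, hA]
    simp only [transpose_mul, diagonal_transpose, transpose_transpose, Matrix.mul_assoc]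
    rw [← Matrix.mul_assoc Uᵀ, hU, Matrix.one_mul, ← Matrix.mul_assoc (diagonal d),
      diagonal_mul_diagonal, sq]
    rfl
  have hx : V *ᵥ Pi.single k 1 ≠ 0 := fun h0 => by
    have := congrArg (Vᵀ *ᵥ ·) h0
    simp only [mulVec_mulVec, hV, one_mulVec, mulVec_zero] at this
    simpa using congrFun this k
  refine (isHermitian_conjTranspose_mul_self A).exists_eigenvalues_eq hx ?_
  rw [hAA, mulVec_mulVec, Matrix.mul_assoc, hV, Matrix.mul_one, ← mulVec_mulVec,
    diagonal_mulVec_single, mul_one, ← mulVec_smul, ← Pi.single_smul, smul_eq_mul, mul_one,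
    Pi.pow_apply]

theorem le_sval_zero_of_svd (hU : Uᵀ * U = 1) (hV : Vᵀ * V = 1)
    (hA : A = U * diagonal d * Vᵀ) {k : ι} (hk : 0 ≤ d k) : d k ≤ sval A 0 := by
  obtain ⟨i, hi⟩ := exists_eigenvalues_eq_sq_of_svd hU hV hA k
  rw [← Real.sqrt_sq hk]
  exact sqrt_le_sval (card_pos.mpr ⟨i, mem_filter.mpr ⟨mem_univ _, hi.ge⟩⟩)

end SVD

section SVDFin

variable {N T r : ℕ} {A : Matrix (Fin N) (Fin T) ℝ} {U : Matrix (Fin N) (Fin r) ℝ}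
  {V : Matrix (Fin T) (Fin r) ℝ} {d : Fin r → ℝ}

theorem le_sval_pred_of_svd (hr : 0 < r) (hU : Uᵀ * U = 1) (hV : Vᵀ * V = 1)
    (hA : A = U * diagonal d * Vᵀ) {δ : ℝ} (hδ : 0 < δ) (hd : ∀ k, δ ≤ |d k|) :
    δ ≤ sval A (r - 1) := by
  have hU₁ := fun z => (mulVec_dotProduct_self_of_transpose_mul_self_eq_one hU z).symm.le
  have hV₁ := fun z => (mulVec_dotProduct_self_of_transpose_mul_self_eq_one hV z).symm.le
  simpa using le_sval_pred_of_eq_mul_diagonal_mul_transpose hr hA one_pos one_pos hδ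
    (by simpa using hU₁) (by simpa using hV₁) hd

/-- Here `d k ^ 2` is a nonzero eigenvalue of `Aᴴ A`, which has exactly `r` of them. -/
theorem sval_pred_le_of_svd (hU : Uᵀ * U = 1) (hV : Vᵀ * V = 1) (hA : A = U * diagonal d * Vᵀ)
    (hd : ∀ k, 0 < d k) (k : Fin r) : sval A (r - 1) ≤ d k := by
  obtain ⟨i, hi⟩ := exists_eigenvalues_eq_sq_of_svd hU hV hA k
  set hH := isHermitian_conjTranspose_mul_self A
  have hrank : #{j | hH.eigenvalues j ≠ 0} = r := by
    rw [← Fintype.card_subtype, ← hH.rank_eq_card_non_zero_eigs, rank_conjTranspose_mul_self,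
      rank_eq_of_svd hU hV hA fun k => (hd k).ne', Fintype.card_fin]
  rw [← Real.sqrt_sq (hd k).le]
  refine sval_le_sqrt (sq_nonneg _) ?_
  calc #{j | d k ^ 2 < hH.eigenvalues j}
      ≤ #(({j | hH.eigenvalues j ≠ 0} : Finset (Fin T)).erase i) := by
        refine card_le_card fun j hj => ?_
        have hj : d k ^ 2 < hH.eigenvalues j := (mem_filter.mp hj).2
        simp only [mem_erase, mem_filter, mem_univ, true_and]
        exact ⟨by rintro rfl; exact hj.ne' hi, ((sq_nonneg _).trans_lt hj).ne'⟩
    _ = r - 1 := by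
        rw [card_erase_of_mem (mem_filter.mpr ⟨mem_univ _, hi ▸ pow_ne_zero 2 (hd k).ne'⟩), hrank]

end SVDFin

theorem sqrt_div_mul_div_eq {a : ℝ} (ha : 0 ≤ a) (N N₀ T T₀ : ℝ) :
    √(a / (N / N₀) * (a / (T / T₀))) = a * √(N₀ * T₀ / (N * T)) := by
  rw [← Real.sqrt_sq ha, ← Real.sqrt_mul (sq_nonneg a), Real.sqrt_sq ha]
  congr 1
  field_simp

/-- Singular values of a submatrix: if `M = U D Vᵀ` is a rank-`r` SVD and the rows of
`U` (resp. `V`) indexed by the submatrix are well spread, then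
`ψ₁(M₀) ≤ C ψ₁(M) √(N₀T₀/(NT))` and `ψ_r(M₀) ≥ c ψ_r(M) √(N₀T₀/(NT))`; in particular
`M₀` has rank `r` and condition number `κ₀ ≤ (C/c) κ`. -/
theorem stmt13 (N T N₀ T₀ r : ℕ) (hr : 0 < r) (hN₀ : 0 < N₀) (hT₀ : 0 < T₀)
    (hN : N₀ ≤ N) (hT : T₀ ≤ T)
    (U : Matrix (Fin N) (Fin r) ℝ) (V : Matrix (Fin T) (Fin r) ℝ) (d : Fin r → ℝ)
    (hU : Uᵀ * U = 1) (hV : Vᵀ * V = 1) (hd : ∀ k, 0 < d k)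
    (M : Matrix (Fin N) (Fin T) ℝ) (hM : M = U * Matrix.diagonal d * Vᵀ)
    (M₀ : Matrix (Fin N₀) (Fin T₀) ℝ)
    (hM₀ : M₀ = M.submatrix (Fin.castLE hN) (Fin.castLE hT))
    (c C : ℝ) (hc : 0 < c) (hcC : c ≤ C)
    (hUlow : (((N : ℝ) / N₀) • (∑ i : Fin N₀, vecMulVec (fun k => U (Fin.castLE hN i) k)
        (fun k => U (Fin.castLE hN i) k)) - c • (1 : Matrix (Fin r) (Fin r) ℝ)).PosSemidef)
    (hUhigh : (C • (1 : Matrix (Fin r) (Fin r) ℝ) -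
        ((N : ℝ) / N₀) • (∑ i : Fin N₀, vecMulVec (fun k => U (Fin.castLE hN i) k)
        (fun k => U (Fin.castLE hN i) k))).PosSemidef)
    (hVlow : (((T : ℝ) / T₀) • (∑ t : Fin T₀, vecMulVec (fun k => V (Fin.castLE hT t) k)
        (fun k => V (Fin.castLE hT t) k)) - c • (1 : Matrix (Fin r) (Fin r) ℝ)).PosSemidef)
    (hVhigh : (C • (1 : Matrix (Fin r) (Fin r) ℝ) -
        ((T : ℝ) / T₀) • (∑ t : Fin T₀, vecMulVec (fun k => V (Fin.castLE hT t) k)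
        (fun k => V (Fin.castLE hT t) k))).PosSemidef) :
    sval M₀ 0 ≤ C * sval M 0 * Real.sqrt ((N₀ * T₀ : ℝ) / (N * T)) ∧
    c * sval M (r - 1) * Real.sqrt ((N₀ * T₀ : ℝ) / (N * T)) ≤ sval M₀ (r - 1) ∧
    M₀.rank = r ∧
    sval M₀ 0 / sval M₀ (r - 1) ≤ (C / c) * (sval M 0 / sval M (r - 1)) := by
  obtain ⟨k₀, -, hk₀⟩ := exists_min_image univ d ⟨⟨0, hr⟩, mem_univ _⟩
  obtain ⟨k₁, -, hk₁⟩ := exists_max_image univ d ⟨⟨0, hr⟩, mem_univ _⟩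
  have hdk₀ : ∀ k, d k₀ ≤ |d k| := fun k => (hk₀ k (mem_univ k)).trans (le_abs_self _)
  have hdk₁ : ∀ k, |d k| ≤ d k₁ := fun k => (abs_of_pos (hd k)).trans_le (hk₁ k (mem_univ k))
  set U₀ := U.submatrix (Fin.castLE hN) id
  set V₀ := V.submatrix (Fin.castLE hT) id
  have hM₀' : M₀ = U₀ * diagonal d * V₀ᵀ := by subst hM₀ hM; ext; simp [U₀, V₀, mul_apply]
  have hsN : (0 : ℝ) < N / N₀ := by have := hN₀.trans_le hN; positivity
  have hsT : (0 : ℝ) < T / T₀ := by have := hT₀.trans_le hT; positivity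
  have hU₀lo := le_mulVec_dotProduct_self_of_posSemidef (X := U₀) hsN hUlow
  have hU₀hi := mulVec_dotProduct_self_le_of_posSemidef (X := U₀) hsN hUhigh
  have hV₀lo := le_mulVec_dotProduct_self_of_posSemidef (X := V₀) hsT hVlow
  have hV₀hi := mulVec_dotProduct_self_le_of_posSemidef (X := V₀) hsT hVhigh
  have hC : 0 < C := hc.trans_le hcC
  set ρ := √((N₀ * T₀ : ℝ) / (N * T))
  have hρ : 0 < ρ := by have := hN₀.trans_le hN; have := hT₀.trans_le hT; positivity
  have hMtop : d k₁ ≤ sval M 0 := le_sval_zero_of_svd hU hV hM (hd k₁).le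
  have hMbot : sval M (r - 1) ≤ d k₀ := sval_pred_le_of_svd hU hV hM hd k₀
  have hMbot_pos : 0 < sval M (r - 1) :=
    (hd k₀).trans_le (le_sval_pred_of_svd hr hU hV hM (hd k₀) hdk₀)
  have h₁ : sval M₀ 0 ≤ C * sval M 0 * ρ := calc
    sval M₀ 0 ≤ C * ρ * d k₁ := sqrt_div_mul_div_eq hC.le _ _ _ _ ▸
      sval_le_of_eq_mul_diagonal_mul_transpose hM₀' (by positivity) (by positivity) (hd k₁).le
        hU₀hi hV₀hi hdk₁ 0
    _ ≤ C * sval M 0 * ρ := by rw [mul_right_comm]; gcongr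
  have h₂ : c * sval M (r - 1) * ρ ≤ sval M₀ (r - 1) := calc
    c * sval M (r - 1) * ρ ≤ c * ρ * d k₀ := by rw [mul_right_comm]; gcongr
    _ ≤ sval M₀ (r - 1) := sqrt_div_mul_div_eq hc.le _ _ _ _ ▸
      le_sval_pred_of_eq_mul_diagonal_mul_transpose hr hM₀' (div_pos hc hsN) (div_pos hc hsT)
        (hd k₀) hU₀lo hV₀lo hdk₀
  refine ⟨h₁, h₂, ?_, ?_⟩
  · rw [rank_eq_of_eq_mul_diagonal_mul_transpose hM₀' (div_pos hc hsN) (div_pos hc hsT) hU₀lo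
      hV₀lo fun k => (hd k).ne', Fintype.card_fin]
  · calc sval M₀ 0 / sval M₀ (r - 1)
        ≤ C * sval M 0 * ρ / (c * sval M (r - 1) * ρ) :=
          div_le_div₀ (by have := (hd k₁).le.trans hMtop; positivity) h₁ (by positivity) h₂
      _ = C / c * (sval M 0 / sval M (r - 1)) := by field_simp
end
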